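/- arXiv:1505.02125 — 3 statements merged into one kernel-verified Lean document; each statement's English description precedes it below -/
import Mathlib

section
/- For all n ≥ 1, f_Ŝ(n) ≡ 1 (mod 3) if n = k(3k+1)/2 for some integer k with k ≡ 0 or 3 (mod 4); f_Ŝ(n) ≡ 2 (mod 3) if n = k(3k+1)/2 for some integer k with k ≡ 1 or 2 (mod 4); and f_Ŝ(n) ≡ 0 (mod 3) otherwise. -/
open scoped Classical

/-- Number of irreducible spin characters of the double cover of `S(n)`:
self-associate spin characters (labelled by partitions of `n` into distinct parts `λ`
with `n - ℓ(λ)` even) counted once, non-self-associate pairs counted twice. -/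
noncomputable def fShat (n : ℕ) : ℕ :=
  ((Nat.Partition.distincts n).filter (fun l => Even (n - l.parts.card))).card
    + 2 * ((Nat.Partition.distincts n).filter (fun l => ¬ Even (n - l.parts.card))).card

/-!
Modulo 3 the weights `1` and `2` of `fShat` are `1` and `-1`, so `fShat n ≡ ∑ (-1) ^ (n - ℓ(λ))`
over the partitions `λ` of `n` into distinct parts. Up to the sign `(-1) ^ n` this is the
coefficient of `q ^ n` in `∏ (1 - q ^ i)`, which Euler's pentagonal number theorem evaluates as
`(-1) ^ k` when `n = k (3k + 1) / 2` and `0` otherwise. The total sign `(-1) ^ (n + k)` depends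
only on `k mod 4`.
-/

open PowerSeries Finset

namespace Nat.Partition

open PowerSeries.WithPiTopology

variable {R : Type*} [CommRing R]

theorem card_parts_le {n : ℕ} (p : n.Partition) : p.parts.card ≤ n := by
  simpa [p.parts_sum] using
    Multiset.card_nsmul_le_sum (s := p.parts) (a := 1) fun _ hi ↦ p.parts_pos hi

theorem hasProd_one_sub_X_pow_sum_distincts [TopologicalSpace R] [T2Space R] :
    HasProd (fun i ↦ (1 - X ^ (i + 1) : R⟦X⟧))
      (PowerSeries.mk fun n ↦ ∑ p ∈ distincts n, (-1 : R) ^ p.parts.card) := by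
  convert! hasProd_genFun (fun _ c ↦ if c = 1 then (-1 : R) else 0) using 1
  · ext1 i
    rw [tsum_eq_single 0 (fun j hj ↦ by simp [hj])]
    simp [sub_eq_add_neg]
  · ext n
    simp_rw [coeff_mk, coeff_genFun, distincts, sum_filter, Finsupp.prod, prod_ite_zero]
    refine sum_congr rfl fun p _ ↦ ?_
    simp only [Multiset.toFinsupp_support, Multiset.toFinsupp_apply, Multiset.mem_toFinset]
    by_cases hp : p.parts.Nodup
    · rw [if_pos hp, if_pos (Multiset.nodup_iff_count_eq_one.1 hp), prod_const,
        Multiset.card_toFinset, Multiset.dedup_eq_self.2 hp]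
    · rw [if_neg hp, if_neg (mt Multiset.nodup_iff_count_eq_one.2 hp)]

theorem sum_distincts_neg_one_pow_card (n : ℕ) :
    ∑ p ∈ distincts n, (-1 : R) ^ p.parts.card = (pentagonalSeries R).coeff n := by
  let : TopologicalSpace R := ⊥
  have : DiscreteTopology R := ⟨rfl⟩
  rw [← coeff_mk n fun n ↦ ∑ p ∈ distincts n, (-1 : R) ^ p.parts.card,
    hasProd_one_sub_X_pow_sum_distincts.unique (hasProd_one_sub_X_pow R)]

end Nat.Partition

section Pentagonal

variable {R : Type*} [CommRing R] {n : ℕ}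

theorem coeff_pentagonalSeries_of_mul_eq {k : ℤ} (hk : k * (3 * k + 1) = 2 * n) :
    (pentagonalSeries R).coeff n = k.negOnePow := by
  have hpent : pentagonal (-k) = n := by
    have := two_mul_natCast_pentagonal_neg k
    omega
  rw [← hpent, coeff_pentagonalSeries_pentagonal, Int.negOnePow_neg]

theorem coeff_pentagonalSeries_of_forall_ne (h : ¬ ∃ k : ℤ, k * (3 * k + 1) = 2 * n) :
    (pentagonalSeries R).coeff n = 0 := by
  refine coeff_pentagonalSeries_eq_zero R fun ⟨k, hk⟩ ↦ h ⟨-k, ?_⟩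
  rw [← hk, two_mul_natCast_pentagonal]
  ring

theorem even_natCast_add_iff_of_mul_eq {k : ℤ} (hk : k * (3 * k + 1) = 2 * n) :
    Even ((n : ℤ) + k) ↔ k % 4 = 0 ∨ k % 4 = 3 := by
  have hsq := Int.mul_emod k k 4
  have hk' : 3 * (k * k) + k = 2 * n := by linear_combination hk
  rw [Int.even_iff]
  rcases (by omega : k % 4 = 0 ∨ k % 4 = 1 ∨ k % 4 = 2 ∨ k % 4 = 3) with h | h | h | h <;>
    rw [h] at hsq <;> omega

end Pentagonal

theorem neg_one_pow_sub_of_le {M : Type*} [Monoid M] [HasDistribNeg M] {m n : ℕ} (h : m ≤ n) :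
    (-1 : M) ^ (n - m) = (-1) ^ m * (-1) ^ n := by
  obtain ⟨d, rfl⟩ := Nat.exists_eq_add_of_le h
  rw [Nat.add_sub_cancel_left, pow_add, ← mul_assoc, ← pow_add, ← two_mul, pow_mul, neg_one_sq,
    one_pow, one_mul]

theorem natCast_fShat (n : ℕ) :
    (fShat n : ZMod 3) = ∑ p ∈ Nat.Partition.distincts n, (-1) ^ (n - p.parts.card) := by
  simp_rw [neg_one_pow_eq_ite, sum_ite, sum_const, fShat]
  push_cast
  rw [show (2 : ZMod 3) = -1 by decide]
  simp

theorem natCast_fShat_eq_neg_one_pow_mul_coeff (n : ℕ) :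
    (fShat n : ZMod 3) = (-1) ^ n * (pentagonalSeries (ZMod 3)).coeff n := by
  rw [natCast_fShat, ← Nat.Partition.sum_distincts_neg_one_pow_card, mul_sum]
  exact sum_congr rfl fun p _ ↦ by rw [neg_one_pow_sub_of_le p.card_parts_le, mul_comm]

theorem natCast_fShat_of_mul_eq {n : ℕ} {k : ℤ} (hk : k * (3 * k + 1) = 2 * n) :
    (fShat n : ZMod 3) = if k % 4 = 0 ∨ k % 4 = 3 then 1 else -1 := by
  rw [natCast_fShat_eq_neg_one_pow_mul_coeff, coeff_pentagonalSeries_of_mul_eq hk,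
    ← Int.cast_negOnePow_natCast, ← Int.cast_mul, ← Units.val_mul, ← Int.negOnePow_add]
  have hpar := even_natCast_add_iff_of_mul_eq hk
  by_cases h : k % 4 = 0 ∨ k % 4 = 3
  · rw [if_pos h, Int.negOnePow_even _ (hpar.2 h)]
    simp
  · rw [if_neg h, Int.negOnePow_odd _ (Int.not_even_iff_odd.1 (mt hpar.1 h))]
    simp

theorem spchar_hatS_mod3_general (n : ℕ) :
    ((∃ k : ℤ, k * (3 * k + 1) = 2 * (n : ℤ) ∧ (k % 4 = 0 ∨ k % 4 = 3)) → fShat n % 3 = 1) ∧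
    ((∃ k : ℤ, k * (3 * k + 1) = 2 * (n : ℤ) ∧ (k % 4 = 1 ∨ k % 4 = 2)) → fShat n % 3 = 2) ∧
    ((¬ ∃ k : ℤ, k * (3 * k + 1) = 2 * (n : ℤ)) → fShat n % 3 = 0) := by
  refine ⟨fun ⟨k, hk, hk4⟩ ↦ ?_, fun ⟨k, hk, hk4⟩ ↦ ?_, fun h ↦ ?_⟩ <;>
    rw [← ZMod.val_natCast]
  · rw [natCast_fShat_of_mul_eq hk, if_pos hk4]
    rfl
  · rw [natCast_fShat_of_mul_eq hk, if_neg (by omega)]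
    rfl
  · rw [natCast_fShat_eq_neg_one_pow_mul_coeff, coeff_pentagonalSeries_of_forall_ne h, mul_zero]
    rfl

theorem spchar_hatS_mod3 (n : ℕ) (hn : 1 ≤ n) :
    ((∃ k : ℤ, k * (3 * k + 1) = 2 * (n : ℤ) ∧ (k % 4 = 0 ∨ k % 4 = 3)) → fShat n % 3 = 1) ∧
    ((∃ k : ℤ, k * (3 * k + 1) = 2 * (n : ℤ) ∧ (k % 4 = 1 ∨ k % 4 = 2)) → fShat n % 3 = 2) ∧
    ((¬ ∃ k : ℤ, k * (3 * k + 1) = 2 * (n : ℤ)) → fShat n % 3 = 0) :=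
  spchar_hatS_mod3_general n
end

section
/- As formal power series in q with integer coefficients, (q²;q²)_∞³ / ((q;q)_∞ (q⁴;q⁴)_∞) = ∑_{n=−∞}^{∞} (−1)^{(3n²+7n)/2} q^{n(3n+1)/2}. -/
/-!
Pairing the factors of `(-q;-q)_∞ (q;q)_∞` gives `1 - q^(2n)` for odd `n` and `(1 - q^n)^2` for
even `n`, so `(q²;q²)_∞³ = (-q;-q)_∞ (q;q)_∞ (q⁴;q⁴)_∞` and the left-hand side is `(-q;-q)_∞`.
Euler's pentagonal number theorem `(q;q)_∞ = ∑ₖ (-1)^k q^(k(3k-1)/2)`, evaluated at `-q` and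
reindexed by `n = -k`, produces exactly the signs `(-1)^((3n²+7n)/2)`. Infinite products are
limits of their partial products in the coefficientwise topology.
-/

open scoped Classical

/-- The formal power series ∏_{n≥1} (1 - q^(c·n)), i.e. (q^c; q^c)_∞.
The d-th coefficient of the infinite product agrees with that of the partial product
over the first d+1 factors, since all later factors are 1 + O(q^(d+1)). -/
noncomputable def euler (c : ℕ) : PowerSeries ℤ :=
  PowerSeries.mk fun d =>
    PowerSeries.coeff d
      (∏ n ∈ Finset.range (d + 1), (1 - (PowerSeries.X : PowerSeries ℤ) ^ (c * (n + 1))))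

/-- The multiplicative inverse of (q^c; q^c)_∞ (its constant coefficient is 1). -/
noncomputable def eulerInv (c : ℕ) : PowerSeries ℤ := (euler c).invOfUnit 1

/-- The series ∑_{n∈ℤ} (−1)^((3n²+7n)/2) q^(n(3n+1)/2); all integer solutions n of
n(3n+1)/2 = d satisfy |n| ≤ 2d+1, so the inner sum captures them all. -/
noncomputable def pentSignSum : PowerSeries ℤ :=
  PowerSeries.mk fun d =>
    ∑ k ∈ Finset.Icc (-(2 * (d : ℤ) + 1)) (2 * (d : ℤ) + 1),
      if k * (3 * k + 1) = 2 * (d : ℤ)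
      then (((-1 : ℤˣ) ^ ((3 * k ^ 2 + 7 * k) / 2) : ℤˣ) : ℤ) else 0

open PowerSeries PowerSeries.WithPiTopology Finset Filter Topology

theorem PowerSeries.coeff_mul_one_sub_X_pow_of_lt {R : Type*} [CommRing R] (f : R⟦X⟧)
    {d k : ℕ} (h : d < k) : coeff d (f * (1 - X ^ k)) = coeff d f := by
  rw [mul_sub, mul_one, map_sub, coeff_mul_X_pow', if_neg (not_le.mpr h), sub_zero]

theorem coeff_prod_range_eq_coeff_euler {c d m : ℕ} (hc : 0 < c) (hm : d < m) :
    coeff d (∏ n ∈ range m, (1 - X ^ (c * (n + 1)) : ℤ⟦X⟧)) = coeff d (euler c) := by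
  induction m, hm using Nat.le_induction with
  | base => rw [euler, coeff_mk]
  | succ m hm ih =>
    rw [prod_range_succ, coeff_mul_one_sub_X_pow_of_lt _ (by nlinarith), ih]

theorem tendsto_prod_range_euler {c : ℕ} (hc : 0 < c) :
    Tendsto (fun m ↦ ∏ n ∈ range m, (1 - X ^ (c * (n + 1)) : ℤ⟦X⟧)) atTop (𝓝 (euler c)) := by
  rw [tendsto_iff_coeff_tendsto]
  exact fun d ↦ tendsto_atTop_of_eventually_const fun m hm ↦
    coeff_prod_range_eq_coeff_euler hc (Nat.lt_of_succ_le hm)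

theorem euler_one : euler 1 = pentagonalSeries ℤ :=
  tendsto_nhds_unique (by simpa using tendsto_prod_range_euler one_pos)
    (hasProd_one_sub_X_pow ℤ).tendsto_prod_nat

theorem euler_mul_eulerInv {c : ℕ} (hc : 0 < c) : euler c * eulerInv c = 1 := by
  refine mul_invOfUnit _ _ ?_
  rw [← coeff_zero_eq_constantCoeff_apply, ← coeff_prod_range_eq_coeff_euler hc one_pos]
  simp [hc.ne']

theorem PowerSeries.WithPiTopology.tendsto_rescale {R ι : Type*} [CommRing R]
    [TopologicalSpace R] [IsTopologicalRing R] {F : ι → R⟦X⟧} {l : Filter ι} {f : R⟦X⟧}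
    (h : Tendsto F l (𝓝 f)) (a : R) : Tendsto (fun i ↦ rescale a (F i)) l (𝓝 (rescale a f)) := by
  rw [tendsto_iff_coeff_tendsto] at h ⊢
  simpa only [coeff_rescale] using fun d ↦ (h d).const_mul (a ^ d)

theorem prod_one_sub_neg_pow_mul_prod_one_sub_pow {R : Type*} [CommRing R] (x : R) (M : ℕ) :
    (∏ n ∈ range (2 * M), (1 - (-x) ^ (n + 1))) * (∏ n ∈ range (2 * M), (1 - x ^ (n + 1))) *
        ∏ n ∈ range M, (1 - x ^ (4 * (n + 1))) =
      (∏ n ∈ range (2 * M), (1 - x ^ (2 * (n + 1)))) *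
        (∏ n ∈ range M, (1 - x ^ (2 * (n + 1)))) ^ 2 := by
  induction M with
  | zero => simp
  | succ M ih =>
    simp only [Nat.mul_succ, prod_range_succ]
    have hodd : (-x) ^ (2 * M + 1) = -x ^ (2 * M + 1) := Odd.neg_pow ⟨M, rfl⟩ x
    have heven : (-x) ^ (2 * M + 1 + 1) = x ^ (2 * M + 1 + 1) := Even.neg_pow ⟨M + 1, by ring⟩ x
    rw [hodd, heven]
    linear_combination ((1 - x ^ (2 * (2 * M + 1))) * (1 - x ^ (2 * (2 * M + 1 + 1))) *
      (1 - x ^ (2 * (M + 1))) ^ 2) * ih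

theorem euler_two_pow_three : euler 2 ^ 3 = rescale (-1) (euler 1) * euler 1 * euler 4 := by
  have h1 := tendsto_prod_range_euler one_pos
  simp only [one_mul] at h1
  have h2 := tendsto_prod_range_euler two_pos
  have h4 := tendsto_prod_range_euler (by norm_num : 0 < 4)
  have hdouble : Tendsto (fun M : ℕ ↦ 2 * M) atTop atTop := tendsto_id.const_mul_atTop' two_pos
  have hneg : ∀ m, rescale (-1) (∏ n ∈ range m, (1 - X ^ (n + 1)) : ℤ⟦X⟧) =
      ∏ n ∈ range m, (1 - (-X) ^ (n + 1)) := by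
    simp [map_prod, rescale_X]
  have lhs := (h2.comp hdouble).mul (h2.pow 2)
  have rhs := (((tendsto_rescale h1 (-1)).comp hdouble).mul (h1.comp hdouble)).mul h4
  simp only [Function.comp_def, hneg, prod_one_sub_neg_pow_mul_prod_one_sub_pow] at rhs
  rw [pow_succ', tendsto_nhds_unique lhs rhs]

theorem natAbs_le_pentagonal (k : ℤ) : k.natAbs ≤ pentagonal k := by
  have h := two_mul_natCast_pentagonal k
  zify
  rcases abs_cases k with ⟨hk, _⟩ | ⟨hk, _⟩ <;> rw [hk] <;> nlinarith

theorem mul_three_mul_add_one_eq_two_mul_iff_pentagonal_neg {m : ℤ} {d : ℕ} :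
    m * (3 * m + 1) = 2 * d ↔ pentagonal (-m) = d := by
  rw [← two_mul_natCast_pentagonal_neg]
  omega

theorem pentSignSum_sign_neg (k : ℤ) :
    (((-1 : ℤˣ) ^ ((3 * (-k) ^ 2 + 7 * (-k)) / 2) : ℤˣ) : ℤ) =
      (-1) ^ pentagonal k * (k.negOnePow : ℤ) := by
  have h : (3 * (-k) ^ 2 + 7 * (-k)) / 2 = pentagonal k - 3 * k := by
    rw [show 3 * (-k) ^ 2 + 7 * (-k) = 2 * (pentagonal k - 3 * k) by
      linear_combination -two_mul_natCast_pentagonal k]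
    exact Int.mul_ediv_cancel_left _ two_ne_zero
  have hparity : (pentagonal k - 3 * k : ℤ).negOnePow = (pentagonal k + k : ℤ).negOnePow :=
    (Int.negOnePow_eq_iff _ _).2 ⟨-2 * k, by ring⟩
  rw [h, ← Int.negOnePow_def, hparity, Int.negOnePow_add, Units.val_mul,
    Int.coe_negOnePow_natCast]

theorem rescale_neg_one_pentagonalSeries : rescale (-1) (pentagonalSeries ℤ) = pentSignSum := by
  ext d
  simp only [coeff_rescale, pentSignSum, coeff_mk,
    mul_three_mul_add_one_eq_two_mul_iff_pentagonal_neg]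
  by_cases hd : d ∈ Set.range pentagonal
  · obtain ⟨k, rfl⟩ := hd
    simp_rw [pentagonal_inj, neg_eq_iff_eq_neg]
    have hk : -k ∈ Icc (-(2 * (pentagonal k : ℤ) + 1)) (2 * pentagonal k + 1) := by
      have := natAbs_le_pentagonal k
      rw [mem_Icc]
      omega
    rw [sum_ite_eq', if_pos hk, pentSignSum_sign_neg, coeff_pentagonalSeries_pentagonal,
      Int.cast_id]
  · rw [coeff_pentagonalSeries_eq_zero ℤ hd, mul_zero, eq_comm]
    exact sum_eq_zero fun m _ ↦ if_neg fun h ↦ hd ⟨-m, h⟩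

/-- (q²;q²)_∞³/((q;q)_∞(q⁴;q⁴)_∞) = ∑_{n∈ℤ} (−1)^((3n²+7n)/2) q^(n(3n+1)/2). -/
theorem quintuple_specialization :
    (euler 2) ^ 3 * eulerInv 1 * eulerInv 4 = pentSignSum := by
  calc (euler 2) ^ 3 * eulerInv 1 * eulerInv 4
      = rescale (-1) (euler 1) * (euler 1 * eulerInv 1) * (euler 4 * eulerInv 4) := by
        rw [euler_two_pow_three]; ring
    _ = rescale (-1) (pentagonalSeries ℤ) := by
        rw [euler_mul_eulerInv one_pos, euler_mul_eulerInv (by norm_num), euler_one, mul_one,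
          mul_one]
    _ = pentSignSum := rescale_neg_one_pentagonalSeries
end

section
/- Let p be a prime with p ≡ 5 or 11 (mod 24), and let N be a positive integer of the form p²n + pr + (p²−1)/24 with n ≥ 0 and 1 ≤ r ≤ p−1. Then 24N + 1 cannot be written as (6m+1)² + 48k² for any integers m and k. -/
/-!
Writing `24 N + 1 = p (p (24 n + 1) + 24 r)` with `p ∤ 24 r` shows that `p` divides `24 N + 1`
exactly once. But `(6 m + 1)² + 48 k² = x² + 3 y²` with `y = 4 k`, and as `-3` is a quadratic
non-residue modulo a prime `p ≡ 2 (mod 3)`, `p ∣ x² + 3 y²` forces `p ∣ x` and `p ∣ y`,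
hence `p² ∣ x² + 3 y²`.
-/

theorem legendreSym_neg_three_of_mod_three_eq_two {p : ℕ} [Fact p.Prime] (hp2 : p ≠ 2)
    (hp3 : p % 3 = 2) : legendreSym p (-3) = -1 := by
  have hodd : Odd p := (Fact.out : p.Prime).odd_of_ne_two hp2
  rw [jacobiSym.legendreSym.to_jacobiSym, jacobiSym.mod_right _ hodd]
  have h12 : p % (4 * (-3 : ℤ).natAbs) = 5 ∨ p % (4 * (-3 : ℤ).natAbs) = 11 := by
    have := Nat.odd_iff.mp hodd
    norm_num
    omega
  rcases h12 with h | h <;> rw [h] <;> norm_num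

theorem sq_dvd_sq_add_three_mul_sq {p : ℕ} [Fact p.Prime] (hp2 : p ≠ 2) (hp3 : p % 3 = 2)
    {x y : ℤ} (h : (p : ℤ) ∣ x ^ 2 + 3 * y ^ 2) : (p : ℤ) ^ 2 ∣ x ^ 2 + 3 * y ^ 2 := by
  obtain ⟨⟨a, rfl⟩, ⟨b, rfl⟩⟩ := legendreSym.prime_dvd_of_eq_neg_one
    (legendreSym_neg_three_of_mod_three_eq_two hp2 hp3) (x := x) (y := y) (by simpa using h)
  exact ⟨a ^ 2 + 3 * b ^ 2, by ring⟩

theorem not_sq_dvd_mul_mul_add {p a b : ℕ} (hp : 0 < p) (hb : ¬ p ∣ b) :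
    ¬ p ^ 2 ∣ p * (p * a + b) := by
  rw [sq, Nat.mul_dvd_mul_iff_left hp, Nat.dvd_add_right (dvd_mul_right p a)]
  exact hb

theorem twentyfour_mul_add_one_eq {p : ℕ} (hp : p ^ 2 % 24 = 1) (n r : ℕ) :
    24 * (p ^ 2 * n + p * r + (p ^ 2 - 1) / 24) + 1 = p * (p * (24 * n + 1) + 24 * r) := by
  have hq : 24 * ((p ^ 2 - 1) / 24) + 1 = p ^ 2 := by omega
  calc 24 * (p ^ 2 * n + p * r + (p ^ 2 - 1) / 24) + 1
      = 24 * p ^ 2 * n + 24 * p * r + (24 * ((p ^ 2 - 1) / 24) + 1) := by ring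
    _ = p * (p * (24 * n + 1) + 24 * r) := by rw [hq]; ring

theorem no_representation_general (p : ℕ) (hp : p.Prime) (h24 : p % 24 = 5 ∨ p % 24 = 11)
    (n r N : ℕ) (hr1 : 1 ≤ r) (hr2 : r ≤ p - 1)
    (hN : N = p ^ 2 * n + p * r + (p ^ 2 - 1) / 24) :
    ¬ ∃ m k : ℤ, 24 * (N : ℤ) + 1 = (6 * m + 1) ^ 2 + 48 * k ^ 2 := by
  have := Fact.mk hp
  rintro ⟨m, k, h⟩
  have hsq : p ^ 2 % 24 = 1 := by rw [Nat.pow_mod]; rcases h24 with h | h <;> rw [h]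
  have hfac : 24 * N + 1 = p * (p * (24 * n + 1) + 24 * r) :=
    hN ▸ twentyfour_mul_add_one_eq hsq n r
  have hrep : 24 * (N : ℤ) + 1 = (6 * m + 1) ^ 2 + 3 * (4 * k) ^ 2 := by rw [h]; ring
  have hdvd : (p : ℤ) ^ 2 ∣ 24 * N + 1 := by
    have hp_dvd : (p : ℤ) ∣ ((24 * N + 1 : ℕ) : ℤ) := Int.natCast_dvd_natCast.mpr ⟨_, hfac⟩
    push_cast [hrep] at hp_dvd ⊢
    exact sq_dvd_sq_add_three_mul_sq (by omega) (by omega) hp_dvd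
  have hcop : Nat.Coprime p 24 := by
    rw [Nat.coprime_comm, Nat.Coprime, Nat.gcd_rec]
    rcases h24 with h | h <;> norm_num [h]
  have hr : ¬ p ∣ 24 * r := fun hpr =>
    Nat.not_dvd_of_pos_of_lt hr1 (by omega) (hcop.dvd_of_dvd_mul_left hpr)
  exact not_sq_dvd_mul_mul_add hp.pos hr (hfac ▸ (by exact_mod_cast hdvd : p ^ 2 ∣ 24 * N + 1))

theorem no_representation (p : ℕ) (hp : p.Prime) (h24 : p % 24 = 5 ∨ p % 24 = 11)
    (n r N : ℕ) (hr1 : 1 ≤ r) (hr2 : r ≤ p - 1)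
    (hN : N = p ^ 2 * n + p * r + (p ^ 2 - 1) / 24) (hNpos : 0 < N) :
    ¬ ∃ m k : ℤ, 24 * (N : ℤ) + 1 = (6 * m + 1) ^ 2 + 48 * k ^ 2 :=
  no_representation_general p hp h24 n r N hr1 hr2 hN
end
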